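/- arXiv:2211.16994 — 4 statements merged into one kernel-verified Lean document; each statement's English description precedes it below -/
import Mathlib

section
/- Let A ∈ ℝ^{n×q} be a matrix such that A·Aᵀ is invertible, let y, v̄ ∈ ℝ^n, let σ' > 0, let K > 0 and n > 0, and define A⁺ = Aᵀ(A·Aᵀ)⁻¹. Then Δx⋆ = (1/σ')·A⁺·(y − v̄) is a global minimizer of the CoCoA local subproblem objective G(Δx) = (1/(2Kn))‖v̄ − y‖² + (σ'/(2n))‖A·Δx‖² + (1/n)(v̄ − y)ᵀ·A·Δx, i.e. G(Δx⋆) ≤ G(Δx) for all Δx ∈ ℝ^q. -/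
open Matrix

/-- `Δx⋆ = (1/σ')·A⁺·(y − v̄)` with `A⁺ = Aᵀ(A·Aᵀ)⁻¹` is a global minimizer of
the CoCoA local subproblem objective
`G(Δx) = (1/(2Kn))‖v̄ − y‖² + (σ'/(2n))‖A·Δx‖² + (1/n)(v̄ − y)ᵀ·A·Δx`. -/
theorem cocoa_step_global_minimizer (n q K : ℕ) (hn : 0 < n) (hK : 0 < K)
    (A : Matrix (Fin n) (Fin q) ℝ) (hInv : IsUnit (A * Aᵀ))
    (y vbar : Fin n → ℝ) (σ' : ℝ) (hσ : 0 < σ')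
    (Aplus : Matrix (Fin q) (Fin n) ℝ) (hAplus : Aplus = Aᵀ * (A * Aᵀ)⁻¹)
    (G : (Fin q → ℝ) → ℝ)
    (hG : ∀ Δx : Fin q → ℝ,
      G Δx = (1 / (2 * (K : ℝ) * (n : ℝ))) * ((vbar - y) ⬝ᵥ (vbar - y))
        + (σ' / (2 * (n : ℝ))) * (A.mulVec Δx ⬝ᵥ A.mulVec Δx)
        + (1 / (n : ℝ)) * ((vbar - y) ⬝ᵥ A.mulVec Δx))
    (Δxstar : Fin q → ℝ) (hΔxstar : Δxstar = (1 / σ') • Aplus.mulVec (y - vbar)) :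
    ∀ Δx : Fin q → ℝ, G Δxstar ≤ G Δx := by
  have hAA : A * Aplus = 1 := by
    rw [hAplus, ← Matrix.mul_assoc,
      Matrix.mul_nonsing_inv _ ((Matrix.isUnit_iff_isUnit_det _).mp hInv)]
  have hw : A.mulVec Δxstar = (1 / σ') • (y - vbar) := by
    rw [hΔxstar, Matrix.mulVec_smul, Matrix.mulVec_mulVec, hAA, Matrix.one_mulVec]
  intro Δx
  rw [hG, hG, hw]
  set r : Fin n → ℝ := vbar - y with hr
  set w : Fin n → ℝ := A.mulVec Δx with hww
  have hyv : y - vbar = -r := by simp [hr]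
  rw [hyv]
  have hnpos : (0:ℝ) < n := by exact_mod_cast hn
  have key : 0 ≤ (σ' • w + r) ⬝ᵥ (σ' • w + r) :=
    Finset.sum_nonneg fun i _ => mul_self_nonneg _
  have hcomm : w ⬝ᵥ r = r ⬝ᵥ w := dotProduct_comm _ _
  have hexp : (σ' • w + r) ⬝ᵥ (σ' • w + r)
      = σ' * σ' * (w ⬝ᵥ w) + 2 * σ' * (r ⬝ᵥ w) + r ⬝ᵥ r := by
    simp [add_dotProduct, dotProduct_add, smul_dotProduct, dotProduct_smul, hcomm]
    ring
  have hsd : ((1 / σ') • (-r)) ⬝ᵥ ((1 / σ') • (-r)) = (1/σ')^2 * (r ⬝ᵥ r) := by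
    simp [smul_dotProduct, dotProduct_smul, neg_dotProduct, dotProduct_neg]
    ring
  have hsd2 : r ⬝ᵥ ((1 / σ') • (-r)) = -(1/σ') * (r ⬝ᵥ r) := by
    simp [dotProduct_smul, dotProduct_neg]
  rw [hsd, hsd2]
  rw [hexp] at key
  have h1 : (0:ℝ) < σ' * σ' := mul_pos hσ hσ
  have h2 : (0:ℝ) < 2 * n := by linarith
  have hσ0 : σ' ≠ 0 := ne_of_gt hσ
  have hn0 : (n:ℝ) ≠ 0 := ne_of_gt hnpos
  set a := r ⬝ᵥ r with ha
  set b := r ⬝ᵥ w with hb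
  set c := w ⬝ᵥ w with hc
  have e1 : σ' / (2 * (n:ℝ)) * ((1/σ')^2 * a) = a / (2 * n * σ') := by
    field_simp
  have e2 : (1 / (n:ℝ)) * (-(1/σ') * a) = -2 * (a / (2 * n * σ')) := by
    field_simp
  have hmain : 0 ≤ σ' / (2 * (n:ℝ)) * c + (1 / (n:ℝ)) * b + a / (2 * n * σ') := by
    have h3 : (0:ℝ) < 1 / (2 * n * σ') := by positivity
    have h4 := mul_nonneg h3.le key
    have eq : (1 / (2 * (n:ℝ) * σ')) * (σ' * σ' * c + 2 * σ' * b + a)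
        = σ' / (2 * (n:ℝ)) * c + (1 / (n:ℝ)) * b + a / (2 * n * σ') := by
      field_simp
    linarith [eq ▸ h4]
  linarith [e1, e2, hmain]
end

section
/- Let A ∈ ℝ^{n×q} be a matrix such that A·Aᵀ is invertible, let y, v̄ ∈ ℝ^n, let σ' > 0, let K > 0 and n > 0, and define A⁺ = Aᵀ(A·Aᵀ)⁻¹ and Δx⋆ = (1/σ')·A⁺·(y − v̄). Then Δx⋆ has the minimum Euclidean norm among all global minimizers of the CoCoA local subproblem objective: for every Δx ∈ ℝ^q with G(Δx) ≤ G(Δz) for all Δz ∈ ℝ^q, one has ‖Δx⋆‖ ≤ ‖Δx‖. -/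
/-!
Completing the square, `G(Δx)` equals a constant plus `‖σ'·AΔx + (v̄ − y)‖² / (2nσ')`. Since
`A·A⁺ = 1`, this square vanishes at `Δx⋆`, so the minimizers of `G` are exactly the solutions of
`AΔx = AΔx⋆`. As `Δx⋆` lies in the range of `Aᵀ`, it is orthogonal to the kernel of `A`, and
Pythagoras gives `‖Δx‖² = ‖Δx⋆‖² + ‖Δx − Δx⋆‖²` for every such solution.
-/

open Matrix

section

variable {m k : Type*} [Fintype m] [Fintype k]

theorem norm_toLp_transpose_mulVec_le (A : Matrix m k ℝ) (c : m → ℝ) {x : k → ℝ}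
    (hx : A *ᵥ x = A *ᵥ (Aᵀ *ᵥ c)) :
    ‖WithLp.toLp 2 (Aᵀ *ᵥ c)‖ ≤ ‖WithLp.toLp 2 x‖ := by
  set xstar := Aᵀ *ᵥ c
  have horth : inner ℝ (WithLp.toLp 2 xstar) (WithLp.toLp 2 (x - xstar)) = 0 := by
    rw [EuclideanSpace.inner_toLp_toLp, star_trivial, dotProduct_mulVec, vecMul_transpose,
      mulVec_sub, hx, sub_self, zero_dotProduct]
  have hpyth := norm_add_sq_eq_norm_sq_add_norm_sq_real horth
  rw [← WithLp.toLp_add, add_sub_cancel] at hpyth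
  rw [mul_self_le_mul_self_iff (norm_nonneg _) (norm_nonneg _), hpyth]
  exact le_add_of_nonneg_right (mul_self_nonneg _)

/-- The CoCoA local subproblem objective, with `r = v̄ − y`. -/
noncomputable def localObjective (K n σ : ℝ) (A : Matrix m k ℝ) (r : m → ℝ) (Δx : k → ℝ) : ℝ :=
  1 / (2 * K * n) * (r ⬝ᵥ r) + σ / (2 * n) * (A *ᵥ Δx ⬝ᵥ A *ᵥ Δx) + 1 / n * (r ⬝ᵥ A *ᵥ Δx)

theorem localObjective_eq_add_sq {n σ : ℝ} (hn : n ≠ 0) (hσ : σ ≠ 0) (K : ℝ) (A : Matrix m k ℝ)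
    (r : m → ℝ) (Δx : k → ℝ) :
    localObjective K n σ A r Δx = (1 / (2 * K * n) - 1 / (2 * n * σ)) * (r ⬝ᵥ r)
      + 1 / (2 * n * σ) * ((σ • A *ᵥ Δx + r) ⬝ᵥ (σ • A *ᵥ Δx + r)) := by
  simp only [localObjective, add_dotProduct, dotProduct_add, smul_dotProduct, dotProduct_smul,
    smul_eq_mul, dotProduct_comm r]
  field_simp
  ring

theorem smul_mulVec_add_eq_zero_of_localObjective_le {n σ : ℝ} (hn : 0 < n) (hσ : 0 < σ)
    (K : ℝ) (A : Matrix m k ℝ) (r : m → ℝ) {x z : k → ℝ} (hz : σ • A *ᵥ z + r = 0)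
    (hle : localObjective K n σ A r x ≤ localObjective K n σ A r z) :
    σ • A *ᵥ x + r = 0 := by
  rw [localObjective_eq_add_sq hn.ne' hσ.ne', localObjective_eq_add_sq hn.ne' hσ.ne', hz,
    dotProduct_zero, mul_zero, add_zero, add_le_iff_nonpos_right] at hle
  have hsq_nonpos := nonpos_of_mul_nonpos_right hle (by positivity)
  exact dotProduct_self_eq_zero.mp
    (hsq_nonpos.antisymm (Fintype.sum_nonneg fun i => mul_self_nonneg _))

end

theorem cocoa_step_min_norm_general (n q K : ℕ) (hn : 0 < n)
    (A : Matrix (Fin n) (Fin q) ℝ) (hInv : IsUnit (A * Aᵀ))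
    (y vbar : Fin n → ℝ) (σ' : ℝ) (hσ : 0 < σ')
    (Aplus : Matrix (Fin q) (Fin n) ℝ) (hAplus : Aplus = Aᵀ * (A * Aᵀ)⁻¹)
    (G : (Fin q → ℝ) → ℝ)
    (hG : ∀ Δx : Fin q → ℝ,
      G Δx = (1 / (2 * (K : ℝ) * (n : ℝ))) * ((vbar - y) ⬝ᵥ (vbar - y))
        + (σ' / (2 * (n : ℝ))) * (A.mulVec Δx ⬝ᵥ A.mulVec Δx)
        + (1 / (n : ℝ)) * ((vbar - y) ⬝ᵥ A.mulVec Δx))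
    (Δxstar : Fin q → ℝ) (hΔxstar : Δxstar = (1 / σ') • Aplus.mulVec (y - vbar)) :
    ∀ Δx : Fin q → ℝ, (∀ Δz : Fin q → ℝ, G Δx ≤ G Δz) →
      ‖(WithLp.equiv 2 (Fin q → ℝ)).symm Δxstar‖ ≤ ‖(WithLp.equiv 2 (Fin q → ℝ)).symm Δx‖ := by
  intro Δx hmin
  have hobj : G = localObjective K n σ' A (vbar - y) := funext hG
  have hright : A * Aplus = 1 := by
    rw [hAplus, ← Matrix.mul_assoc, mul_nonsing_inv _ ((isUnit_iff_isUnit_det _).mp hInv)]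
  have hstar : σ' • A *ᵥ Δxstar + (vbar - y) = 0 := by
    rw [hΔxstar, mulVec_smul, mulVec_mulVec, hright, one_mulVec, smul_smul,
      mul_one_div_cancel hσ.ne', one_smul, sub_add_sub_cancel, sub_self]
  have hx : σ' • A *ᵥ Δx + (vbar - y) = 0 :=
    smul_mulVec_add_eq_zero_of_localObjective_le (Nat.cast_pos.mpr hn) hσ K A _ hstar
      (hobj ▸ hmin Δxstar)
  have hsame : A *ᵥ Δx = A *ᵥ Δxstar :=
    smul_right_injective _ hσ.ne' (add_right_cancel (hx.trans hstar.symm))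
  have hrange : Δxstar = Aᵀ *ᵥ ((1 / σ') • (A * Aᵀ)⁻¹ *ᵥ (y - vbar)) := by
    rw [hΔxstar, hAplus, mulVec_smul, ← mulVec_mulVec]
  rw [hrange] at hsame ⊢
  exact norm_toLp_transpose_mulVec_le A _ hsame

/-- `Δx⋆ = (1/σ')·A⁺·(y − v̄)` has minimum Euclidean norm among all global
minimizers of the CoCoA local subproblem objective `G`. -/
theorem cocoa_step_min_norm (n q K : ℕ) (hn : 0 < n) (hK : 0 < K)
    (A : Matrix (Fin n) (Fin q) ℝ) (hInv : IsUnit (A * Aᵀ))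
    (y vbar : Fin n → ℝ) (σ' : ℝ) (hσ : 0 < σ')
    (Aplus : Matrix (Fin q) (Fin n) ℝ) (hAplus : Aplus = Aᵀ * (A * Aᵀ)⁻¹)
    (G : (Fin q → ℝ) → ℝ)
    (hG : ∀ Δx : Fin q → ℝ,
      G Δx = (1 / (2 * (K : ℝ) * (n : ℝ))) * ((vbar - y) ⬝ᵥ (vbar - y))
        + (σ' / (2 * (n : ℝ))) * (A.mulVec Δx ⬝ᵥ A.mulVec Δx)
        + (1 / (n : ℝ)) * ((vbar - y) ⬝ᵥ A.mulVec Δx))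
    (Δxstar : Fin q → ℝ) (hΔxstar : Δxstar = (1 / σ') • Aplus.mulVec (y - vbar)) :
    ∀ Δx : Fin q → ℝ, (∀ Δz : Fin q → ℝ, G Δx ≤ G Δz) →
      ‖(WithLp.equiv 2 (Fin q → ℝ)).symm Δxstar‖ ≤ ‖(WithLp.equiv 2 (Fin q → ℝ)).symm Δx‖ :=
  cocoa_step_min_norm_general n q K hn A hInv y vbar σ' hσ Aplus hAplus G hG Δxstar hΔxstar
end

section
/- Let A ∈ ℝ^{n×p}, fix a partition of the column index set {1,…,p} into K nonempty disjoint sets I_1,…,I_K, and let A_{[k]} denote the submatrix of A consisting of the columns indexed by I_k. Assume each A_{[k]}·A_{[k]}ᵀ ∈ ℝ^{n×n} is invertible and set A_{[k]}⁺ = A_{[k]}ᵀ(A_{[k]}·A_{[k]}ᵀ)⁻¹. Consider the CoCoA inner iteration producing x^{i+1} and v_k^{i+1} from x^i and v_k^i by: v̄^i = (1/K)·Σ_{k=1}^K v_k^i, Δx_k^i = (1/K)·A_{[k]}⁺·(y − v̄^i), x^{i+1} restricted to indices I_k equals x^i restricted to I_k plus Δx_k^i, and v_k^{i+1} = v̄^i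 + K·A_{[k]}·Δx_k^i. Then for every i ≥ 1 one has v_k^i = y for all k and x^i = x^1, i.e. the inner iteration converges after its first iteration. -/
open Matrix

/-- The submatrix `A_{[k]}` of `A` consisting of the columns assigned to node `k` by the
partition `part` of the column indices (the fibers of `part` are the partition classes). -/
def blockCols {n p K : ℕ} (A : Matrix (Fin n) (Fin p) ℝ) (part : Fin p → Fin K)
    (k : Fin K) : Matrix (Fin n) {j : Fin p // part j = k} ℝ :=
  Matrix.of fun i j => A i (j : Fin p)

/-- The pseudoinverse `A_{[k]}⁺ = A_{[k]}ᵀ (A_{[k]}·A_{[k]}ᵀ)⁻¹` of the block `A_{[k]}`. -/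
noncomputable def blockPinv {n p K : ℕ} (A : Matrix (Fin n) (Fin p) ℝ)
    (part : Fin p → Fin K) (k : Fin K) : Matrix {j : Fin p // part j = k} (Fin n) ℝ :=
  (blockCols A part k)ᵀ * (blockCols A part k * (blockCols A part k)ᵀ)⁻¹

/-- The blockwise stacked matrix `Ā ∈ ℝ^{p×n}` whose rows indexed by the partition class of
node `k` equal the corresponding rows of `(1/K)·A_{[k]}⁺`. -/
noncomputable def stackedPinv {n p K : ℕ} (A : Matrix (Fin n) (Fin p) ℝ)
    (part : Fin p → Fin K) : Matrix (Fin p) (Fin n) ℝ :=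
  Matrix.of fun j i => (1 / (K : ℝ)) * blockPinv A part (part j) ⟨j, rfl⟩ i


/-- With all local problems overparameterized (every block Gram matrix
`A_{[k]}·A_{[k]}ᵀ` invertible), the CoCoA inner iteration
`v̄ⁱ = (1/K)·∑ₖ vₖⁱ`, `Δxₖⁱ = (1/K)·A_{[k]}⁺·(y − v̄ⁱ)`,
`xⁱ⁺¹_{[k]} = xⁱ_{[k]} + Δxₖⁱ`, `vₖⁱ⁺¹ = v̄ⁱ + K·A_{[k]}·Δxₖⁱ`
converges after its first iteration: for every `i ≥ 1`, `vₖⁱ = y` for all `k` and `xⁱ = x¹`. -/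
theorem cocoa_inner_converges_one_step (n p K : ℕ) (hK : 0 < K)
    (A : Matrix (Fin n) (Fin p) ℝ) (part : Fin p → Fin K)
    (hpart : Function.Surjective part)
    (hinv : ∀ k : Fin K, IsUnit (blockCols A part k * (blockCols A part k)ᵀ))
    (y : Fin n → ℝ)
    (x : ℕ → Fin p → ℝ) (v : ℕ → Fin K → Fin n → ℝ)
    (hx : ∀ (i : ℕ) (j : Fin p),
      x (i + 1) j = x i j +
        ((1 / (K : ℝ)) • (blockPinv A part (part j)).mulVec
            (y - (1 / (K : ℝ)) • ∑ k : Fin K, v i k)) ⟨j, rfl⟩)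
    (hv : ∀ (i : ℕ) (k : Fin K),
      v (i + 1) k = (1 / (K : ℝ)) • ∑ k' : Fin K, v i k' +
        (K : ℝ) • (blockCols A part k).mulVec
          ((1 / (K : ℝ)) • (blockPinv A part k).mulVec
            (y - (1 / (K : ℝ)) • ∑ k' : Fin K, v i k'))) :
    ∀ i : ℕ, 1 ≤ i → (∀ k : Fin K, v i k = y) ∧ x i = x 1 := by
  have hK' : (K:ℝ) ≠ 0 := Nat.cast_ne_zero.mpr hK.ne'
  have hBP : ∀ k, blockCols A part k * blockPinv A part k = 1 := by
    intro k
    rw [blockPinv, ← Matrix.mul_assoc,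
      Matrix.mul_nonsing_inv _ ((Matrix.isUnit_iff_isUnit_det _).mp (hinv k))]
  have hvy : ∀ i k, v (i + 1) k = y := by
    intro i k
    rw [hv i k, Matrix.mulVec_smul, smul_smul, mul_one_div_cancel hK', one_smul,
      Matrix.mulVec_mulVec, hBP k, Matrix.one_mulVec]
    abel
  have hxstep : ∀ i, (∀ k, v i k = y) → x (i + 1) = x i := by
    intro i hvi
    funext j
    have hsum : y - (1 / (K : ℝ)) • ∑ k : Fin K, v i k = 0 := by
      simp only [hvi, Finset.sum_const, Finset.card_fin]
      rw [← Nat.cast_smul_eq_nsmul ℝ, smul_smul, one_div_mul_cancel hK', one_smul, sub_self]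
    rw [hx i j, hsum]
    simp
  intro i hi
  obtain ⟨j, rfl⟩ : ∃ j, i = j + 1 := ⟨i - 1, (Nat.succ_pred_eq_of_pos hi).symm⟩
  refine ⟨hvy j, ?_⟩
  induction j with
  | zero => rfl
  | succ m ih => rw [hxstep (m + 1) (hvy m), ih m.succ_pos]
end

section
/- (Lemma 1.) Let A ∈ ℝ^{n×p}, fix a partition I_1,…,I_K of {1,…,p} with each A_{[k]}·A_{[k]}ᵀ invertible, set A_{[k]}⁺ = A_{[k]}ᵀ(A_{[k]}·A_{[k]}ᵀ)⁻¹, let Ā ∈ ℝ^{p×n} be the matrix whose rows indexed by I_k equal (1/K)·A_{[k]}⁺, and let P = I_p − Ā·A. Then for every previous iterate w ∈ ℝ^p and target y ∈ ℝ^n, the CoCoA output w' = P·w + Ā·y solves the task exactly: A·w' = y. -/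
open Matrix

lemma block_mul_pinv {n p K : ℕ} (A : Matrix (Fin n) (Fin p) ℝ) (part : Fin p → Fin K)
    (hinv : ∀ k : Fin K, IsUnit (blockCols A part k * (blockCols A part k)ᵀ))
    (k : Fin K) : blockCols A part k * blockPinv A part k = 1 := by
  rw [blockPinv, ← Matrix.mul_assoc]
  exact Matrix.mul_nonsing_inv _ ((Matrix.isUnit_iff_isUnit_det _).mp (hinv k))

lemma mul_stackedPinv {n p K : ℕ} (hK : 0 < K) (A : Matrix (Fin n) (Fin p) ℝ)
    (part : Fin p → Fin K)
    (hinv : ∀ k : Fin K, IsUnit (blockCols A part k * (blockCols A part k)ᵀ)) :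
    A * stackedPinv A part = 1 := by
  ext i i'
  rw [Matrix.mul_apply]
  rw [← Fintype.sum_fiberwise part (fun j => A i j * stackedPinv A part j i')]
  have step : ∀ k : Fin K, (∑ j : {j : Fin p // part j = k},
      A i (j : Fin p) * stackedPinv A part (j : Fin p) i')
      = (1 / (K : ℝ)) * (1 : Matrix (Fin n) (Fin n) ℝ) i i' := by
    intro k
    have h1 : ∀ j : {j : Fin p // part j = k},
        A i (j : Fin p) * stackedPinv A part (j : Fin p) i'
        = (1 / (K : ℝ)) * (blockCols A part k i j * blockPinv A part k j i') := by
      rintro ⟨j, rfl⟩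
      simp [stackedPinv, blockCols]
      ring
    rw [Finset.sum_congr rfl (fun j _ => h1 j), ← Finset.mul_sum,
      ← Matrix.mul_apply, block_mul_pinv A part hinv k]
  rw [Finset.sum_congr rfl (fun k _ => step k), Finset.sum_const, Finset.card_univ,
    Fintype.card_fin, nsmul_eq_mul]
  field_simp

/-- Lemma 1: With every block Gram matrix `A_{[k]}·A_{[k]}ᵀ` invertible and
`P = I_p − Ā·A`, the CoCoA output `w' = P·w + Ā·y` solves the task exactly: `A·w' = y`. -/
theorem cocoa_output_solves_task (n p K : ℕ) (hK : 0 < K)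
    (A : Matrix (Fin n) (Fin p) ℝ) (part : Fin p → Fin K)
    (hpart : Function.Surjective part)
    (hinv : ∀ k : Fin K, IsUnit (blockCols A part k * (blockCols A part k)ᵀ))
    (P : Matrix (Fin p) (Fin p) ℝ) (hP : P = 1 - stackedPinv A part * A)
    (w : Fin p → ℝ) (y : Fin n → ℝ)
    (w' : Fin p → ℝ) (hw' : w' = P.mulVec w + (stackedPinv A part).mulVec y) :
    A.mulVec w' = y := by
  subst hw' hP
  have h := mul_stackedPinv hK A part hinv
  rw [Matrix.mulVec_add, Matrix.mulVec_mulVec, Matrix.mulVec_mulVec,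
    Matrix.mul_sub, Matrix.mul_one, ← Matrix.mul_assoc, h, Matrix.one_mul,
    sub_self, Matrix.zero_mulVec, Matrix.one_mulVec, zero_add]
end
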